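/- arXiv:1407.2026 — 2 statements merged into one kernel-verified Lean document; each statement's English description precedes it below -/
import Mathlib

section
/- Let g_{rs}^j, g_{rs}^k be antisymmetric holomorphic functions on overlapping charts related by a biholomorphic Poisson transition z_j = f(z_k, t) depending holomorphically on a parameter t, so that g^j_{αβ}(f(z_k,t),t) = Σ_{r,s} g^k_{rs}(z_k,t) (∂f^α/∂z_k^r)(∂f^β/∂z_k^s). Then differentiating in t yields the cocycle relation: λ_k − λ_j + [Λ_t, θ] = 0, where λ_j = Σ (∂g^j_{αβ}/∂t) ∂/∂z_j^α ∧ ∂/∂z_j^β, λ_k = Σ (∂g^k_{rs}/∂t) ∂/∂z_k^r ∧ ∂/∂z_k^s, Λ_t = Σ g^j_{rs} ∂/∂z_j^r ∧ ∂/∂z_j^s, and θ = Σ_α (∂f^α/∂t) ∂/∂z_j^α. -/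
/-!
Fix `w` and `t`, put `z = e w t`, and let `C τ` be the Jacobian of `f · τ` at `z`, `G τ` the
matrix `gk · · z τ` and `D` the Jacobian of `e · t` at `w`. The Poisson condition says that
`gj · · (f z τ) τ = C G Cᵀ`. Differentiating at `τ = t` gives, by the chain rule on the left and the
product rule on the right, `∂ₜgj + ∑ c, ∂_c gj θᶜ = (Ċ G Cᵀ + C Ġ Cᵀ + C G Ċᵀ)_ab`.
Since partial derivatives commute, `∂_c θᵃ = (Ċ D)_ac`, so the Schouten term is
`(Ċ D gj + gj (Ċ D)ᵀ)_ab`; substituting `gj = C G Cᵀ` and `D C = 1` turns it into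
`(Ċ G Cᵀ + C G Ċᵀ)_ab`, which cancels against the derivative.
-/

open scoped BigOperators

/-- holomorphic partial derivative ∂/∂z_l on ℂⁿ -/
noncomputable def pd {n : ℕ} (l : Fin n) (f : (Fin n → ℂ) → ℂ) : (Fin n → ℂ) → ℂ :=
  fun z => fderiv ℂ f z (Pi.single l 1)

open Function
open scoped Matrix

lemma fderiv_fderiv_apply {𝕜 E F : Type*} [NontriviallyNormedField 𝕜] [NormedAddCommGroup E]
    [NormedSpace 𝕜 E] [NormedAddCommGroup F] [NormedSpace 𝕜 F] {G : E → F} {p : E}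
    (hG : DifferentiableAt 𝕜 (fderiv 𝕜 G) p) (q v : E) :
    fderiv 𝕜 (fun y => fderiv 𝕜 G y q) p v = fderiv 𝕜 (fderiv 𝕜 G) p v q := by
  simp [fderiv_clm_apply hG (differentiableAt_const q)]

section PartialDerivatives

variable {n : ℕ}

lemma fderiv_apply_eq_sum_pd (φ : (Fin n → ℂ) → ℂ) (x v : Fin n → ℂ) :
    fderiv ℂ φ x v = ∑ c, pd c φ x * v c := by
  have hsingle (c : Fin n) : (Pi.single c 1 : Fin n → ℂ) = fun j => if c = j then 1 else 0 := by
    funext j; simp [Pi.single_apply, eq_comm]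
  simpa [pd, hsingle, mul_comm] using (fderiv ℂ φ x : (Fin n → ℂ) →ₗ[ℂ] ℂ).pi_apply_eq_sum_univ v

lemma pd_comp {φ : (Fin n → ℂ) → ℂ} {h : (Fin n → ℂ) → Fin n → ℂ} {x : Fin n → ℂ} (l : Fin n)
    (hφ : DifferentiableAt ℂ φ (h x)) (hh : DifferentiableAt ℂ h x) :
    pd l (fun y => φ (h y)) x = ∑ i, pd i φ (h x) * pd l (fun y => h y i) x := by
  have hcomp : HasFDerivAt (fun y => φ (h y)) ((fderiv ℂ φ (h x)).comp (fderiv ℂ h x)) x :=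
    hφ.hasFDerivAt.comp x hh.hasFDerivAt
  rw [pd, hcomp.fderiv, ContinuousLinearMap.comp_apply, fderiv_apply_eq_sum_pd,
    fderiv_pi fun i => differentiableAt_pi.1 hh i]
  rfl

variable {F : (Fin n → ℂ) → ℂ → ℂ} {x : Fin n → ℂ} {t : ℂ}

lemma hasDerivAt_slice_right (hF : DifferentiableAt ℂ (uncurry F) (x, t)) :
    HasDerivAt (F x) (fderiv ℂ (uncurry F) (x, t) (0, 1)) t :=
  hF.hasFDerivAt.comp_hasDerivAt t ((hasDerivAt_const t x).prodMk (hasDerivAt_id t))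

lemma hasFDerivAt_slice_left (hF : DifferentiableAt ℂ (uncurry F) (x, t)) :
    HasFDerivAt (fun z => F z t)
      ((fderiv ℂ (uncurry F) (x, t)).comp (.inl ℂ (Fin n → ℂ) ℂ)) x :=
  hF.hasFDerivAt.comp (f := fun z => (z, t)) x (hasFDerivAt_prodMk_left x t)

lemma pd_slice_left (hF : DifferentiableAt ℂ (uncurry F) (x, t)) (c : Fin n) :
    pd c (fun z => F z t) x = fderiv ℂ (uncurry F) (x, t) (Pi.single c 1, 0) := by
  rw [pd, (hasFDerivAt_slice_left hF).fderiv]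
  rfl

lemma differentiableAt_slice_left (hF : DifferentiableAt ℂ (uncurry F) (x, t)) :
    DifferentiableAt ℂ (fun z => F z t) x :=
  (hasFDerivAt_slice_left hF).differentiableAt

lemma differentiableAt_slice_left_pi {Φ : (Fin n → ℂ) → ℂ → Fin n → ℂ}
    (hΦ : ∀ i, DifferentiableAt ℂ (uncurry fun z τ => Φ z τ i) (x, t)) :
    DifferentiableAt ℂ (fun z => Φ z t) x :=
  differentiableAt_pi.2 fun i => differentiableAt_slice_left (hΦ i)

lemma differentiableAt_slice_right (hF : DifferentiableAt ℂ (uncurry F) (x, t)) :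
    DifferentiableAt ℂ (F x) t :=
  (hasDerivAt_slice_right hF).differentiableAt

lemma hasDerivAt_comp_curve {γ : ℂ → Fin n → ℂ} {γ' : Fin n → ℂ}
    (hF : DifferentiableAt ℂ (uncurry F) (γ t, t)) (hγ : HasDerivAt γ γ' t) :
    HasDerivAt (fun τ => F (γ τ) τ)
      (deriv (F (γ t)) t + ∑ c, pd c (fun z => F z t) (γ t) * γ' c) t := by
  have hcurve : HasDerivAt (fun τ => (γ τ, τ)) (γ', 1) t := hγ.prodMk (hasDerivAt_id t)
  refine (hF.hasFDerivAt.comp_hasDerivAt (f := fun τ => (γ τ, τ)) t hcurve).congr_deriv ?_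
  rw [(hasDerivAt_slice_right hF).deriv, ← fderiv_apply_eq_sum_pd,
    (hasFDerivAt_slice_left hF).fderiv, ContinuousLinearMap.comp_apply, ← map_add]
  simp

lemma uncurry_pd_eq (hF : Differentiable ℂ (uncurry F)) (c : Fin n) :
    uncurry (fun z τ => pd c (fun z => F z τ) z)
      = fun p => fderiv ℂ (uncurry F) p (Pi.single c 1, 0) :=
  funext fun p => pd_slice_left (hF p) c

lemma uncurry_deriv_eq (hF : Differentiable ℂ (uncurry F)) :
    uncurry (fun z τ => deriv (F z) τ) = fun p => fderiv ℂ (uncurry F) p (0, 1) :=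
  funext fun p => (hasDerivAt_slice_right (hF p)).deriv

lemma contDiff_uncurry_pd (hF : ContDiff ℂ 2 (uncurry F)) (c : Fin n) :
    ContDiff ℂ 1 (uncurry fun z τ => pd c (fun z => F z τ) z) := by
  rw [uncurry_pd_eq (hF.differentiable two_ne_zero)]
  exact (hF.fderiv_right le_rfl).clm_apply contDiff_const

lemma contDiff_uncurry_deriv (hF : ContDiff ℂ 2 (uncurry F)) :
    ContDiff ℂ 1 (uncurry fun z τ => deriv (F z) τ) := by
  rw [uncurry_deriv_eq (hF.differentiable two_ne_zero)]
  exact (hF.fderiv_right le_rfl).clm_apply contDiff_const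

lemma pd_deriv_comm (hF : ContDiff ℂ 2 (uncurry F)) (r : Fin n) :
    pd r (fun z => deriv (F z) t) x = deriv (fun τ => pd r (fun z => F z τ) x) t := by
  have hF₁ := hF.differentiable two_ne_zero
  have hF' := (hF.fderiv_right (m := 1) le_rfl).differentiable one_ne_zero (x, t)
  rw [pd_slice_left ((contDiff_uncurry_deriv hF).differentiable one_ne_zero _),
    (hasDerivAt_slice_right ((contDiff_uncurry_pd hF r).differentiable one_ne_zero _)).deriv,
    uncurry_deriv_eq hF₁, uncurry_pd_eq hF₁, fderiv_fderiv_apply hF', fderiv_fderiv_apply hF']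
  exact (hF.contDiffAt.isSymmSndFDerivAt (by simp)) _ _


end PartialDerivatives

section Jacobian

variable {n : ℕ}

noncomputable def jacobianMatrix (φ : (Fin n → ℂ) → Fin n → ℂ) (x : Fin n → ℂ) :
    Matrix (Fin n) (Fin n) ℂ :=
  Matrix.of fun i l => pd l (fun z => φ z i) x

lemma jacobianMatrix_comp {φ h : (Fin n → ℂ) → Fin n → ℂ} {x : Fin n → ℂ}
    (hφ : DifferentiableAt ℂ φ (h x)) (hh : DifferentiableAt ℂ h x) :
    jacobianMatrix (fun z => φ (h z)) x = jacobianMatrix φ (h x) * jacobianMatrix h x := by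
  ext i l
  simp [jacobianMatrix, Matrix.mul_apply, pd_comp l (differentiableAt_pi.1 hφ i) hh]

lemma jacobianMatrix_id (x : Fin n → ℂ) : jacobianMatrix (fun z => z) x = 1 := by
  ext i l
  simp [jacobianMatrix, pd, (hasFDerivAt_apply i x).fderiv, Matrix.one_apply, Pi.single_apply]

lemma jacobianMatrix_mul_eq_one_of_leftInverse {φ h : (Fin n → ℂ) → Fin n → ℂ} {x : Fin n → ℂ}
    (hinv : ∀ y, φ (h y) = y) (hφ : DifferentiableAt ℂ φ (h x)) (hh : DifferentiableAt ℂ h x) :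
    jacobianMatrix φ (h x) * jacobianMatrix h x = 1 := by
  rw [← jacobianMatrix_comp hφ hh, funext hinv, jacobianMatrix_id]

end Jacobian

section MatrixCalculus

variable {𝕜 : Type*} [NontriviallyNormedField 𝕜] {l m p : Type*} {t : 𝕜}

noncomputable def matrixDeriv (A : 𝕜 → Matrix l m 𝕜) (t : 𝕜) : Matrix l m 𝕜 :=
  Matrix.of fun i j => deriv (fun τ => A τ i j) t

lemma hasDerivAt_matrix_mul_apply [Fintype m] {A : 𝕜 → Matrix l m 𝕜} {B : 𝕜 → Matrix m p 𝕜}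
    {A' : Matrix l m 𝕜} {B' : Matrix m p 𝕜}
    (hA : ∀ i j, HasDerivAt (fun τ => A τ i j) (A' i j) t)
    (hB : ∀ j k, HasDerivAt (fun τ => B τ j k) (B' j k) t) (i : l) (k : p) :
    HasDerivAt (fun τ => (A τ * B τ) i k) ((A' * B t + A t * B') i k) t := by
  simp only [Matrix.mul_apply, Matrix.add_apply, ← Finset.sum_add_distrib]
  exact HasDerivAt.fun_sum fun j _ => (hA i j).mul (hB j k)

lemma hasDerivAt_mul_mul_transpose_apply [Fintype m] {C G : 𝕜 → Matrix m m 𝕜}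
    {C' G' : Matrix m m 𝕜}
    (hC : ∀ i j, HasDerivAt (fun τ => C τ i j) (C' i j) t)
    (hG : ∀ i j, HasDerivAt (fun τ => G τ i j) (G' i j) t) (i k : m) :
    HasDerivAt (fun τ => (C τ * G τ * (C τ)ᵀ) i k)
      ((C' * G t * (C t)ᵀ + C t * G' * (C t)ᵀ + C t * G t * C'ᵀ) i k) t := by
  have h := hasDerivAt_matrix_mul_apply (B := fun τ => (C τ)ᵀ) (B' := C'ᵀ)
    (hasDerivAt_matrix_mul_apply hC hG) (fun j k => hC k j) i k
  rwa [Matrix.add_mul] at h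

end MatrixCalculus

section MatrixAlgebra

variable {R : Type*} [CommRing R] {m : Type*} [Fintype m]

lemma Matrix.mul_mul_transpose_apply (A B : Matrix m m R) (i j : m) :
    (A * B * Aᵀ) i j = ∑ r, ∑ s, B r s * A i r * A j s := by
  simp only [Matrix.mul_apply, Matrix.transpose_apply, Finset.sum_mul]
  rw [Finset.sum_comm]
  exact Finset.sum_congr rfl fun _ _ => Finset.sum_congr rfl fun _ _ => by ring

lemma Matrix.sum_mul_add_mul_eq_mul_add_mul_transpose (g M : Matrix m m R) (a b : m) :
    ∑ c, (g c b * M a c + g a c * M b c) = (M * g + g * Mᵀ) a b := by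
  simp [Matrix.mul_apply, Finset.sum_add_distrib, mul_comm]

lemma Matrix.mul_add_mul_transpose_of_mul_eq_one [DecidableEq m] {C G D N : Matrix m m R}
    (hDC : D * C = 1) :
    N * D * (C * G * Cᵀ) + C * G * Cᵀ * (N * D)ᵀ = N * G * Cᵀ + C * G * Nᵀ := by
  have hDC' : Cᵀ * Dᵀ = 1 := by rw [← Matrix.transpose_mul, hDC, Matrix.transpose_one]
  simp only [Matrix.transpose_mul, Matrix.mul_assoc]
  rw [← Matrix.mul_assoc D C, hDC, ← Matrix.mul_assoc Cᵀ Dᵀ, hDC']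
  simp

end MatrixAlgebra

section PoissonTransition

variable {n : ℕ} {gj gk : Fin n → Fin n → (Fin n → ℂ) → ℂ → ℂ}
  {f : (Fin n → ℂ) → ℂ → Fin n → ℂ}

noncomputable def coeffMatrix (g : Fin n → Fin n → (Fin n → ℂ) → ℂ → ℂ) (z : Fin n → ℂ) (τ : ℂ) :
    Matrix (Fin n) (Fin n) ℂ :=
  Matrix.of fun r s => g r s z τ

lemma coeffMatrix_comp_eq_transport
    (hPoisson : ∀ α β z τ, gj α β (f z τ) τ
        = ∑ r, ∑ s, gk r s z τ * pd r (fun w => f w τ α) z * pd s (fun w => f w τ β) z)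
    (z : Fin n → ℂ) (τ : ℂ) :
    coeffMatrix gj (f z τ) τ = jacobianMatrix (f · τ) z * coeffMatrix gk z τ
      * (jacobianMatrix (f · τ) z)ᵀ := by
  ext α β
  rw [Matrix.mul_mul_transpose_apply, coeffMatrix, Matrix.of_apply, hPoisson]
  rfl

lemma hasDerivAt_coeff_comp
    (hPoisson : ∀ α β z τ, gj α β (f z τ) τ
        = ∑ r, ∑ s, gk r s z τ * pd r (fun w => f w τ α) z * pd s (fun w => f w τ β) z)
    (hf : ∀ i, ContDiff ℂ 2 (uncurry fun y τ => f y τ i))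
    (hgk : ∀ r s, Differentiable ℂ (uncurry (gk r s))) (z : Fin n → ℂ) (t : ℂ) (a b : Fin n) :
    HasDerivAt (fun τ => gj a b (f z τ) τ)
      ((matrixDeriv (fun τ => jacobianMatrix (f · τ) z) t * coeffMatrix gk z t
          * (jacobianMatrix (f · t) z)ᵀ
        + jacobianMatrix (f · t) z * matrixDeriv (coeffMatrix gk z) t
          * (jacobianMatrix (f · t) z)ᵀ
        + jacobianMatrix (f · t) z * coeffMatrix gk z t
          * (matrixDeriv (fun τ => jacobianMatrix (f · τ) z) t)ᵀ) a b) t := by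
  have hJ (i r : Fin n) := differentiableAt_slice_right
    ((contDiff_uncurry_pd (hf i) r).differentiable one_ne_zero (z, t))
  have hG (r s : Fin n) := differentiableAt_slice_right (hgk r s (z, t))
  have hfun : (fun τ => gj a b (f z τ) τ) = fun τ => (jacobianMatrix (f · τ) z
      * coeffMatrix gk z τ * (jacobianMatrix (f · τ) z)ᵀ) a b :=
    funext fun τ => congrFun₂ (coeffMatrix_comp_eq_transport hPoisson z τ) a b
  rw [hfun]
  exact hasDerivAt_mul_mul_transpose_apply (fun i r => (hJ i r).hasDerivAt)
    (fun r s => (hG r s).hasDerivAt) a b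

lemma pd_deriv_comp (hf : ∀ i, ContDiff ℂ 2 (uncurry fun y τ => f y τ i))
    {h : (Fin n → ℂ) → Fin n → ℂ} {w : Fin n → ℂ} (hh : DifferentiableAt ℂ h w) (t : ℂ)
    (i c : Fin n) :
    pd c (fun v => deriv (fun τ => f (h v) τ i) t) w
      = (matrixDeriv (fun τ => jacobianMatrix (f · τ) (h w)) t * jacobianMatrix h w) i c := by
  rw [pd_comp (φ := fun y => deriv (fun τ => f y τ i) t) c
    (differentiableAt_slice_left ((contDiff_uncurry_deriv (hf i)).differentiable one_ne_zero _)) hh]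
  simp only [pd_deriv_comm (hf i)]
  rfl

end PoissonTransition

theorem infinitesimal_poisson_deformation_cocycle_general {n : ℕ}
    (gj gk : Fin n → Fin n → (Fin n → ℂ) → ℂ → ℂ)
    (f e : (Fin n → ℂ) → ℂ → (Fin n → ℂ))
    (hgj : ∀ a b, ContDiff ℂ ⊤ (fun p : (Fin n → ℂ) × ℂ => gj a b p.1 p.2))
    (hgk : ∀ a b, ContDiff ℂ ⊤ (fun p : (Fin n → ℂ) × ℂ => gk a b p.1 p.2))
    (hf : ∀ a, ContDiff ℂ ⊤ (fun p : (Fin n → ℂ) × ℂ => f p.1 p.2 a))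
    (he : ∀ a, ContDiff ℂ ⊤ (fun p : (Fin n → ℂ) × ℂ => e p.1 p.2 a))
    (hinv₁ : ∀ z t, e (f z t) t = z)
    (hinv₂ : ∀ w t, f (e w t) t = w)
    -- f is a Poisson map for each t:
    (hPoisson : ∀ α β : Fin n, ∀ z : Fin n → ℂ, ∀ t : ℂ,
      gj α β (f z t) t
        = ∑ r, ∑ s, gk r s z t * pd r (fun w => f w t α) z * pd s (fun w => f w t β) z) :
    ∀ a b : Fin n, ∀ w : Fin n → ℂ, ∀ t : ℂ,
      (∑ r, ∑ s, deriv (fun τ => gk r s (e w t) τ) t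
          * pd r (fun z => f z t a) (e w t) * pd s (fun z => f z t b) (e w t))
      - deriv (fun τ => gj a b w τ) t
      - (∑ c, pd c (fun z => gj a b z t) w * deriv (fun τ => f (e w t) τ c) t)
      + (∑ c, (gj c b w t * pd c (fun w' => deriv (fun τ => f (e w' t) τ a) t) w
            + gj a c w t * pd c (fun w' => deriv (fun τ => f (e w' t) τ b) t) w)) = 0 := by
  intro a b w t
  have hf₂ (i : Fin n) : ContDiff ℂ 2 (uncurry fun y τ => f y τ i) := (hf i).of_le le_top
  have hf₁ (i : Fin n) := (hf₂ i).differentiable two_ne_zero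
  have he₁ (i : Fin n) : Differentiable ℂ (uncurry fun v τ => e v τ i) :=
    ((he i).of_le le_top).differentiable one_ne_zero
  have hgk₁ (r s : Fin n) := ((hgk r s).of_le le_top).differentiable one_ne_zero
  have he_w : DifferentiableAt ℂ (e · t) w := differentiableAt_slice_left_pi fun i => he₁ i _
  set z := e w t
  have hfz : f z t = w := hinv₂ w t
  set C := jacobianMatrix (f · t) z
  set C' := matrixDeriv (fun τ => jacobianMatrix (f · τ) z) t
  have hDC : jacobianMatrix (e · t) w * C = 1 := by
    have h := jacobianMatrix_mul_eq_one_of_leftInverse (hinv₁ · t) (hfz ▸ he_w)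
      (differentiableAt_slice_left_pi fun i => hf₁ i (z, t))
    rwa [hfz] at h
  have hderiv := (hasDerivAt_comp_curve (((hgj a b).of_le le_top).differentiable one_ne_zero _)
    (hasDerivAt_pi.2 fun c => (differentiableAt_slice_right (hf₁ c (z, t))).hasDerivAt)).unique
    (hasDerivAt_coeff_comp hPoisson hf₂ hgk₁ z t a b)
  rw [hfz] at hderiv
  have hbracket : ∑ c, (gj c b w t * (C' * jacobianMatrix (e · t) w) a c
        + gj a c w t * (C' * jacobianMatrix (e · t) w) b c)
      = (C' * coeffMatrix gk z t * Cᵀ + C * coeffMatrix gk z t * C'ᵀ) a b := by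
    rw [← Matrix.mul_add_mul_transpose_of_mul_eq_one hDC, ← hfz,
      ← coeffMatrix_comp_eq_transport hPoisson]
    exact Matrix.sum_mul_add_mul_eq_mul_add_mul_transpose (coeffMatrix gj (f z t) t) _ a b
  have hfirst : ∑ r, ∑ s, deriv (fun τ => gk r s z τ) t
        * pd r (fun y => f y t a) z * pd s (fun y => f y t b) z
      = (C * matrixDeriv (coeffMatrix gk z) t * Cᵀ) a b :=
    (Matrix.mul_mul_transpose_apply C _ a b).symm
  simp only [pd_deriv_comp hf₂ he_w]
  rw [hfirst, hbracket]
  simp only [Matrix.add_apply] at hderiv ⊢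
  linear_combination -hderiv

theorem infinitesimal_poisson_deformation_cocycle {n : ℕ}
    (gj gk : Fin n → Fin n → (Fin n → ℂ) → ℂ → ℂ)
    (f e : (Fin n → ℂ) → ℂ → (Fin n → ℂ))
    (hgj : ∀ a b, ContDiff ℂ ⊤ (fun p : (Fin n → ℂ) × ℂ => gj a b p.1 p.2))
    (hgk : ∀ a b, ContDiff ℂ ⊤ (fun p : (Fin n → ℂ) × ℂ => gk a b p.1 p.2))
    (hf : ∀ a, ContDiff ℂ ⊤ (fun p : (Fin n → ℂ) × ℂ => f p.1 p.2 a))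
    (he : ∀ a, ContDiff ℂ ⊤ (fun p : (Fin n → ℂ) × ℂ => e p.1 p.2 a))
    (hantij : ∀ a b z t, gj a b z t = - gj b a z t)
    (hantik : ∀ a b z t, gk a b z t = - gk b a z t)
    (hinv₁ : ∀ z t, e (f z t) t = z)
    (hinv₂ : ∀ w t, f (e w t) t = w)
    -- f is a Poisson map for each t:
    (hPoisson : ∀ α β : Fin n, ∀ z : Fin n → ℂ, ∀ t : ℂ,
      gj α β (f z t) t
        = ∑ r, ∑ s, gk r s z t * pd r (fun w => f w t α) z * pd s (fun w => f w t β) z) :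
    ∀ a b : Fin n, ∀ w : Fin n → ℂ, ∀ t : ℂ,
      (∑ r, ∑ s, deriv (fun τ => gk r s (e w t) τ) t
          * pd r (fun z => f z t a) (e w t) * pd s (fun z => f z t b) (e w t))
      - deriv (fun τ => gj a b w τ) t
      - (∑ c, pd c (fun z => gj a b z t) w * deriv (fun τ => f (e w t) τ c) t)
      + (∑ c, (gj c b w t * pd c (fun w' => deriv (fun τ => f (e w' t) τ a) t) w
            + gj a c w t * pd c (fun w' => deriv (fun τ => f (e w' t) τ b) t) w)) = 0 :=
  infinitesimal_poisson_deformation_cocycle_general gj gk f e hgj hgk hf he hinv₁ hinv₂ hPoisson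
end

section
/- Let M be a complex manifold with an almost complex structure deformation: suppose Λ is a smooth bivector field of type (2,0) with respect to a new complex structure on M (determined by φ), decomposed as Λ = Λ^{2,0} + Λ^{1,1} + Λ^{0,2}. If [Λ,Λ] = 0 and Λ^{2,0} is holomorphic with respect to the new complex structure, then [Λ^{2,0}, Λ^{2,0}] = 0. -/
/- STATEMENT 9: Work in holomorphic coordinates ξ for the new complex structure; the
complexified tangent frame is indexed by Fin n ⊕ Fin n (holomorphic ∂/∂ξ_l vs.
antiholomorphic ∂/∂ξ̄_l), with the corresponding Wirtinger derivatives.  Let Λ be a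
smooth complex bivector field with components Λ_{ij} (i,j in Fin n ⊕ Fin n),
antisymmetric, decomposing as Λ = Λ^{2,0} + Λ^{1,1} + Λ^{0,2}.  If [Λ,Λ] = 0 (all
Schouten-bracket components vanish) and Λ^{2,0} is holomorphic (∂̄ of its components
vanishes), then [Λ^{2,0}, Λ^{2,0}] = 0. -/

open scoped BigOperators

/-- Wirtinger derivative ∂/∂ξ_l -/
noncomputable def wdz {n : ℕ} (l : Fin n) (f : (Fin n → ℂ) → ℂ) : (Fin n → ℂ) → ℂ :=
  fun z => (1 / 2 : ℂ) *
    (fderiv ℝ f z (Pi.single l 1) - Complex.I * fderiv ℝ f z (Pi.single l Complex.I))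

/-- Wirtinger derivative ∂/∂ξ̄_l -/
noncomputable def wdzbar {n : ℕ} (l : Fin n) (f : (Fin n → ℂ) → ℂ) : (Fin n → ℂ) → ℂ :=
  fun z => (1 / 2 : ℂ) *
    (fderiv ℝ f z (Pi.single l 1) + Complex.I * fderiv ℝ f z (Pi.single l Complex.I))

/-- derivative along the frame element indexed by Fin n ⊕ Fin n -/
noncomputable def frameD {n : ℕ} (i : Fin n ⊕ Fin n) :
    ((Fin n → ℂ) → ℂ) → (Fin n → ℂ) → ℂ :=
  fun f => Sum.elim (fun l => wdz l f) (fun l => wdzbar l f) i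

theorem type20_part_is_poisson {n : ℕ}
    (Λ : (Fin n ⊕ Fin n) → (Fin n ⊕ Fin n) → (Fin n → ℂ) → ℂ)
    (hΛ : ∀ i j, ContDiff ℝ (⊤ : ℕ∞) (Λ i j))
    (hanti : ∀ i j z, Λ i j z = - Λ j i z)
    -- [Λ,Λ] = 0 :
    (hflat : ∀ i j k : Fin n ⊕ Fin n, ∀ z : Fin n → ℂ,
      ∑ l : Fin n ⊕ Fin n,
        (Λ l k z * frameD l (Λ i j) z + Λ l i z * frameD l (Λ j k) z
          + Λ l j z * frameD l (Λ k i) z) = 0)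
    -- Λ^{2,0} is holomorphic with respect to the new complex structure:
    (hhol : ∀ a b c : Fin n, ∀ z : Fin n → ℂ,
      wdzbar c (Λ (Sum.inl a) (Sum.inl b)) z = 0) :
    -- [Λ^{2,0}, Λ^{2,0}] = 0 :
    ∀ a b c : Fin n, ∀ z : Fin n → ℂ,
      ∑ l : Fin n,
        (Λ (Sum.inl l) (Sum.inl c) z * wdz l (Λ (Sum.inl a) (Sum.inl b)) z
          + Λ (Sum.inl l) (Sum.inl a) z * wdz l (Λ (Sum.inl b) (Sum.inl c)) z
          + Λ (Sum.inl l) (Sum.inl b) z * wdz l (Λ (Sum.inl c) (Sum.inl a)) z) = 0 := by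
  intro a b c z
  have h := hflat (Sum.inl a) (Sum.inl b) (Sum.inl c) z
  rw [Fintype.sum_sum_type] at h
  simpa [frameD, hhol] using h
end
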